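/- If each relation Rᵢ has nonempty pixel-error achieving 0 in pixels compatible via the wiring diagram (i.e., there exists a global point x ∈ E' with f'(x) ∈ S' projecting into Pixel(e')), and each Aᵢ is an ε-accurate plot, then the Boolean array product satisfies A'(e') = 1; in particular the pixel array method never reports a pixel as empty when it contains an exact solution of the full system. -/

import Mathlib

/-- The pixel of an entry of a pack: each port `p` is wired to link `φ p`, whose
`Fin (r (φ p))` pixels are the sets `Pix (φ p) a ⊆ ℝ`. -/
def PackPixel {Λ : Type*} {r : Λ → ℕ} (Pix : ∀ ℓ : Λ, Fin (r ℓ) → Set ℝ)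
    {P : Type*} (φ : P → Λ) (e : ∀ p : P, Fin (r (φ p))) : Set (P → ℝ) :=
  {x | ∀ p, x p ∈ Pix (φ p) (e p)}

/-- `A` is an `ε`-accurate plot of the existentially-defined relation
`R_{E,π,f,S}` on the pack with ports `P`. -/
def IsAccuratePlot {Λ : Type*} {r : Λ → ℕ} (Pix : ∀ ℓ : Λ, Fin (r ℓ) → Set ℝ)
    {P : Type*} (φ : P → Λ) {X Y : Type*} [PseudoMetricSpace Y]
    (E : Set X) (pr : X → (P → ℝ)) (f : X → Y) (S : Set Y) (ε : ℝ)
    (A : (∀ p : P, Fin (r (φ p))) → Bool) : Prop :=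
  ∀ e : ∀ p : P, Fin (r (φ p)),
    ((∃ x ∈ E, pr x ∈ PackPixel Pix φ e ∧ f x ∈ S) → A e = true) ∧
    ((∀ x ∈ E, pr x ∈ PackPixel Pix φ e → ∀ y ∈ S, ε < dist (f x) y) →
      A e = false) ∧
    (A e = true → ∀ x ∈ E, pr x ∈ PackPixel Pix φ e →
      ∃ y ∈ S, dist (f x) y ≤ 2 * ε)

/-- Boolean generalized array multiplication specified by a wiring diagram. -/
noncomputable def boolArrMul
    {Λ : Type*} [Fintype Λ] [DecidableEq Λ] {r : Λ → ℕ}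
    {n : ℕ} {P : Fin n → Type*} [∀ i, Fintype (P i)] [∀ i, DecidableEq (P i)]
    (φ : ∀ i, P i → Λ)
    {P' : Type*} [Fintype P'] [DecidableEq P'] (φ' : P' → Λ)
    (A : ∀ i, (∀ p : P i, Fin (r (φ i p))) → Bool)
    (e' : ∀ p : P', Fin (r (φ' p))) : Bool :=
  (Finset.univ.filter
      (fun e : ∀ ℓ : Λ, Fin (r ℓ) => (fun p : P' => e (φ' p)) = e')).sup
    fun e => Finset.univ.inf fun i : Fin n => A i (fun p : P i => e (φ i p))

/-! The exact solution's common link values `z ℓ` select one pixel `e ℓ` per link. This global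
index restricts to `e'` on the outer ports (pixels are unique), and by condition (i) of accuracy
it makes every factor `Aᵢ` true, so it is a witness in the Boolean sum defining `A'(e')`. -/

theorem boolArrMul_eq_true_iff
    {Λ : Type*} [Fintype Λ] [DecidableEq Λ] {r : Λ → ℕ}
    {n : ℕ} {P : Fin n → Type*} [∀ i, Fintype (P i)] [∀ i, DecidableEq (P i)]
    (φ : ∀ i, P i → Λ)
    {P' : Type*} [Fintype P'] [DecidableEq P'] (φ' : P' → Λ)
    (A : ∀ i, (∀ p : P i, Fin (r (φ i p))) → Bool)
    (e' : ∀ p : P', Fin (r (φ' p))) :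
    boolArrMul φ φ' A e' = true ↔
      ∃ e : ∀ ℓ : Λ, Fin (r ℓ),
        (fun p : P' => e (φ' p)) = e' ∧ ∀ i, A i (fun p : P i => e (φ i p)) = true := by
  change _ = ⊤ ↔ _
  simp only [boolArrMul, Finset.sup_eq_top_iff, Finset.inf_eq_top_iff, Finset.mem_filter,
    Finset.mem_univ, true_and, true_implies]
  rfl

theorem IsAccuratePlot.eq_true_of_mem
    {Λ : Type*} {r : Λ → ℕ} {Pix : ∀ ℓ : Λ, Fin (r ℓ) → Set ℝ}
    {P : Type*} {φ : P → Λ} {X Y : Type*} [PseudoMetricSpace Y]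
    {E : Set X} {pr : X → (P → ℝ)} {f : X → Y} {S : Set Y} {ε : ℝ}
    {A : (∀ p : P, Fin (r (φ p))) → Bool} (hA : IsAccuratePlot Pix φ E pr f S ε A)
    {e : ∀ p : P, Fin (r (φ p))} {x : X} (hxE : x ∈ E) (hxe : pr x ∈ PackPixel Pix φ e)
    (hxS : f x ∈ S) : A e = true :=
  (hA e).1 ⟨x, hxE, hxe, hxS⟩

theorem boolArrMul_true_of_exact_solution_general
    {Λ : Type*} [Fintype Λ] [DecidableEq Λ] {r : Λ → ℕ}
    (Pix : ∀ ℓ : Λ, Fin (r ℓ) → Set ℝ) (Box : Λ → Set ℝ)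
    (hPix : ∀ ℓ, ∀ t ∈ Box ℓ, ∃! a : Fin (r ℓ), t ∈ Pix ℓ a)
    {n : ℕ} {P : Fin n → Type*} [∀ i, Fintype (P i)] [∀ i, DecidableEq (P i)]
    (φ : ∀ i, P i → Λ)
    {P' : Type*} [Fintype P'] [DecidableEq P'] (φ' : P' → Λ)
    (σ : Λ → Σ i : Fin n, P i) (hσ : ∀ ℓ, φ (σ ℓ).1 (σ ℓ).2 = ℓ)
    {X : Fin n → Type*} (E : ∀ i, Set (X i)) (pr : ∀ i, X i → (P i → ℝ))
    {k : Fin n → ℕ} (f : ∀ i, X i → (Fin (k i) → ℝ))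
    (Ss : ∀ i, Set (Fin (k i) → ℝ)) (ε : ℝ)
    (A : ∀ i, (∀ p : P i, Fin (r (φ i p))) → Bool)
    (hAcc : ∀ i, IsAccuratePlot Pix (φ i) (E i) (pr i) (f i) (Ss i) ε (A i))
    (e' : ∀ p : P', Fin (r (φ' p)))
    (hx : ∃ x : ∀ i, X i,
      ((∀ i, x i ∈ E i) ∧
        ∃ z : Λ → ℝ, (∀ ℓ, z ℓ ∈ Box ℓ) ∧ ∀ i p, pr i (x i) p = z (φ i p)) ∧
      (fun p' : P' => pr (σ (φ' p')).1 (x (σ (φ' p')).1) (σ (φ' p')).2) ∈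
        PackPixel Pix φ' e' ∧
      ∀ i, f i (x i) ∈ Ss i) :
    boolArrMul φ φ' A e' = true := by
  obtain ⟨x, ⟨hxE, z, hzBox, hzpr⟩, hxe', hxS⟩ := hx
  choose e he hu using fun ℓ => hPix ℓ (z ℓ) (hzBox ℓ)
  have hproj : ∀ p', pr (σ (φ' p')).1 (x (σ (φ' p')).1) (σ (φ' p')).2 = z (φ' p') :=
    fun p' => by rw [hzpr, hσ]
  refine (boolArrMul_eq_true_iff φ φ' A e').2 ⟨e, ?_, fun i => ?_⟩
  · exact funext fun p' => (hu (φ' p') (e' p') (hproj p' ▸ hxe' p')).symm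
  · refine (hAcc i).eq_true_of_mem (hxE i) (fun p => ?_) (hxS i)
    rw [hzpr]
    exact he (φ i p)

/-- No false negatives for the full system: if each `Aᵢ` is an `ε`-accurate plot
of `Rᵢ = R_{Eᵢ,πᵢ,fᵢ,Sᵢ}`, and there is a global point `x ∈ E'` with
`f'(x) ∈ S'` whose projection `π'(x)` lies in the outer pixel `Pixel(e')`, then
the Boolean array product satisfies `A'(e') = 1`: the pixel array method never
reports a pixel as empty when it contains an exact solution of the full
system. -/
theorem boolArrMul_true_of_exact_solution
    {Λ : Type*} [Fintype Λ] [DecidableEq Λ] {r : Λ → ℕ}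
    (Pix : ∀ ℓ : Λ, Fin (r ℓ) → Set ℝ) (Box : Λ → Set ℝ)
    (hPixBox : ∀ ℓ (a : Fin (r ℓ)), Pix ℓ a ⊆ Box ℓ)
    (hPix : ∀ ℓ, ∀ t ∈ Box ℓ, ∃! a : Fin (r ℓ), t ∈ Pix ℓ a)
    {n : ℕ} {P : Fin n → Type*} [∀ i, Fintype (P i)] [∀ i, DecidableEq (P i)]
    (φ : ∀ i, P i → Λ)
    {P' : Type*} [Fintype P'] [DecidableEq P'] (φ' : P' → Λ)
    (σ : Λ → Σ i : Fin n, P i) (hσ : ∀ ℓ, φ (σ ℓ).1 (σ ℓ).2 = ℓ)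
    {X : Fin n → Type*} (E : ∀ i, Set (X i)) (pr : ∀ i, X i → (P i → ℝ))
    {k : Fin n → ℕ} (f : ∀ i, X i → (Fin (k i) → ℝ))
    (Ss : ∀ i, Set (Fin (k i) → ℝ)) (ε : ℝ) (hε : 0 < ε)
    (A : ∀ i, (∀ p : P i, Fin (r (φ i p))) → Bool)
    (hAcc : ∀ i, IsAccuratePlot Pix (φ i) (E i) (pr i) (f i) (Ss i) ε (A i))
    (e' : ∀ p : P', Fin (r (φ' p)))
    (hx : ∃ x : ∀ i, X i,
      ((∀ i, x i ∈ E i) ∧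
        ∃ z : Λ → ℝ, (∀ ℓ, z ℓ ∈ Box ℓ) ∧ ∀ i p, pr i (x i) p = z (φ i p)) ∧
      (fun p' : P' => pr (σ (φ' p')).1 (x (σ (φ' p')).1) (σ (φ' p')).2) ∈
        PackPixel Pix φ' e' ∧
      ∀ i, f i (x i) ∈ Ss i) :
    boolArrMul φ φ' A e' = true :=
  boolArrMul_true_of_exact_solution_general Pix Box hPix φ φ' σ hσ E pr f Ss ε A hAcc e' hx
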